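/- Let $X$ be a Banach space and $C > 0$. If for every bounded set $K \subset X^*$ one has $\omega(K) \le C \cdot \eta(K)$, then for every Banach space $Y$ and every bounded operator $T : X \to Y$ one has $\omega(T^*) \le C \cdot \operatorname{uc}(T)$; and conversely. -/

import Mathlib

open Filter Topology ZeroAtInfty Metric

noncomputable section

variable (𝕜 : Type*) [RCLike 𝕜]

/-- Measure of non-cauchyness of a sequence. -/
noncomputable def caQ {Y : Type*} [NormedAddCommGroup Y] (y : ℕ → Y) : ℝ :=
  ⨅ n : ℕ, sSup { r : ℝ | ∃ k ≥ n, ∃ l ≥ n, r = ‖y k - y l‖ }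

/-- Weakly unconditionally Cauchy series. -/
def WUC {X : Type*} [NormedAddCommGroup X] [NormedSpace 𝕜 X] (x : ℕ → X) : Prop :=
  ∀ f : StrongDual 𝕜 X, Summable fun n => ‖f (x n)‖

/-- wuC with `sup_{f ∈ B_{X*}} ∑ ‖f(x_n)‖ ≤ 1`. -/
def UnitWUC {X : Type*} [NormedAddCommGroup X] [NormedSpace 𝕜 X] (x : ℕ → X) : Prop :=
  ∀ f : StrongDual 𝕜 X, ‖f‖ ≤ 1 → ∀ N : ℕ, ∑ i ∈ Finset.range N, ‖f (x i)‖ ≤ 1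

/-- The quantity uc(T). -/
noncomputable def ucQ {X Y : Type*} [NormedAddCommGroup X] [NormedSpace 𝕜 X]
    [NormedAddCommGroup Y] [NormedSpace 𝕜 Y] (T : X →L[𝕜] Y) : ℝ :=
  sSup { c | ∃ x : ℕ → X, UnitWUC 𝕜 x ∧
    c = caQ (fun n => ∑ i ∈ Finset.range n, T (x i)) }

/-- Unconditionally converging operator. -/
def UncondConv {X Y : Type*} [NormedAddCommGroup X] [NormedSpace 𝕜 X]
    [NormedAddCommGroup Y] [NormedSpace 𝕜 Y] (T : X →L[𝕜] Y) : Prop :=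
  ∀ x : ℕ → X, WUC 𝕜 x → ∀ t : ℕ → 𝕜, (∃ M : ℝ, ∀ n, ‖t n‖ ≤ M) →
    ∃ y, Tendsto (fun N => ∑ i ∈ Finset.range N, t i • T (x i)) atTop (𝓝 y)

/-- The set T*(B_{Y*}) ⊆ X*. -/
def dualBallImage {X Y : Type*} [NormedAddCommGroup X] [NormedSpace 𝕜 X]
    [NormedAddCommGroup Y] [NormedSpace 𝕜 Y] (T : X →L[𝕜] Y) :
    Set (StrongDual 𝕜 X) :=
  { g | ∃ f : StrongDual 𝕜 Y, ‖f‖ ≤ 1 ∧ g = f.comp T }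

/-- The double-limit (Grothendieck) measure of weak non-compactness γ. -/
noncomputable def gammaM {Z : Type*} [NormedAddCommGroup Z] [NormedSpace 𝕜 Z] (A : Set Z) : ℝ :=
  sSup { c | ∃ (a : ℕ → Z) (f : ℕ → StrongDual 𝕜 Z) (g h : ℕ → 𝕜) (l₁ l₂ : 𝕜),
    (∀ n, a n ∈ A) ∧ (∀ m, ‖f m‖ ≤ 1) ∧
    (∀ n, Tendsto (fun m => f m (a n)) atTop (𝓝 (g n))) ∧ Tendsto g atTop (𝓝 l₁) ∧
    (∀ m, Tendsto (fun n => f m (a n)) atTop (𝓝 (h m))) ∧ Tendsto h atTop (𝓝 l₂) ∧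
    c = ‖l₁ - l₂‖ }

/-- A set is weakly compact: compact in the weak topology, i.e. its image under the
canonical map into `(Dual Z) → 𝕜` (with the product topology) is compact. -/
def WeaklyCompactSet {Z : Type*} [NormedAddCommGroup Z] [NormedSpace 𝕜 Z] (K : Set Z) : Prop :=
  IsCompact ((fun z => fun f : StrongDual 𝕜 Z => f z) '' K)

/-- Relatively weakly compact: contained in a weakly compact set. -/
def RelWeaklyCompact {Z : Type*} [NormedAddCommGroup Z] [NormedSpace 𝕜 Z] (A : Set Z) : Prop :=
  ∃ K : Set Z, WeaklyCompactSet 𝕜 K ∧ A ⊆ K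

/-- The de Blasi measure of weak non-compactness ω. -/
noncomputable def deBlasi {Z : Type*} [NormedAddCommGroup Z] [NormedSpace 𝕜 Z] (A : Set Z) : ℝ :=
  sInf { c | 0 ≤ c ∧ ∃ K : Set Z, K.Nonempty ∧ WeaklyCompactSet 𝕜 K ∧
    ∀ a ∈ A, Metric.infDist a K ≤ c }

/-- The quantity η(K) for bounded K ⊆ X*. -/
noncomputable def etaM {X : Type*} [NormedAddCommGroup X] [NormedSpace 𝕜 X]
    (K : Set (StrongDual 𝕜 X)) : ℝ :=
  sSup { c | ∃ x : ℕ → X, UnitWUC 𝕜 x ∧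
    c = Filter.limsup (fun n => sSup { r : ℝ | ∃ f ∈ K, r = ‖f (x n)‖ }) atTop }

/-- Right-Cauchy sequence: Cauchy for uniform convergence on weakly compact subsets of X*. -/
def RightCauchy {X : Type*} [NormedAddCommGroup X] [NormedSpace 𝕜 X] (x : ℕ → X) : Prop :=
  ∀ K : Set (StrongDual 𝕜 X), WeaklyCompactSet 𝕜 K →
    ∀ ε > (0:ℝ), ∃ N, ∀ k ≥ N, ∀ l ≥ N, ∀ f ∈ K, ‖f (x k) - f (x l)‖ ≤ ε

/-- Weakly Cauchy sequence. -/
def WeakCauchySeq {X : Type*} [NormedAddCommGroup X] [NormedSpace 𝕜 X] (x : ℕ → X) : Prop :=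
  ∀ f : StrongDual 𝕜 X, ∃ l : 𝕜, Tendsto (fun n => f (x n)) atTop (𝓝 l)

/-- Distance from an element of the bidual to (the canonical copy of) Y. -/
noncomputable def distToSpace {Y : Type*} [NormedAddCommGroup Y] [NormedSpace 𝕜 Y]
    (φ : StrongDual 𝕜 (StrongDual 𝕜 Y)) : ℝ :=
  Metric.infDist φ (Set.range (NormedSpace.inclusionInDoubleDual 𝕜 Y))

variable {X Y : Type*} [NormedAddCommGroup X] [NormedSpace 𝕜 X]
  [NormedAddCommGroup Y] [NormedSpace 𝕜 Y]

/-- Rcc(T). -/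
noncomputable def RccQ (T : X →L[𝕜] Y) : ℝ :=
  sSup { c | ∃ (x : ℕ → X) (φ : StrongDual 𝕜 (StrongDual 𝕜 Y)),
    (∀ n, ‖x n‖ ≤ 1) ∧ RightCauchy 𝕜 x ∧
    (∀ f : StrongDual 𝕜 Y, Tendsto (fun n => f (T (x n))) atTop (𝓝 (φ f))) ∧
    c = distToSpace 𝕜 φ }

/-- wcc(T). -/
noncomputable def wccQ (T : X →L[𝕜] Y) : ℝ :=
  sSup { c | ∃ (x : ℕ → X) (φ : StrongDual 𝕜 (StrongDual 𝕜 Y)),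
    (∀ n, ‖x n‖ ≤ 1) ∧ WeakCauchySeq 𝕜 x ∧
    (∀ f : StrongDual 𝕜 Y, Tendsto (fun n => f (T (x n))) atTop (𝓝 (φ f))) ∧
    c = distToSpace 𝕜 φ }

/-- Rcc_ω(T). -/
noncomputable def RccOmega (T : X →L[𝕜] Y) : ℝ :=
  sSup { c | ∃ x : ℕ → X, (∀ n, ‖x n‖ ≤ 1) ∧ RightCauchy 𝕜 x ∧
    c = deBlasi 𝕜 (Set.range fun n => T (x n)) }

/-- wcc_ω(T). -/
noncomputable def wccOmega (T : X →L[𝕜] Y) : ℝ :=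
  sSup { c | ∃ x : ℕ → X, (∀ n, ‖x n‖ ≤ 1) ∧ WeakCauchySeq 𝕜 x ∧
    c = deBlasi 𝕜 (Set.range fun n => T (x n)) }

/-- cc_ρ(T). -/
noncomputable def ccRho (T : X →L[𝕜] Y) : ℝ :=
  sSup { c | ∃ x : ℕ → X, (∀ n, ‖x n‖ ≤ 1) ∧ RightCauchy 𝕜 x ∧
    c = caQ (fun n => T (x n)) }

/-- cc(T). -/
noncomputable def ccQ (T : X →L[𝕜] Y) : ℝ :=
  sSup { c | ∃ x : ℕ → X, (∀ n, ‖x n‖ ≤ 1) ∧ WeakCauchySeq 𝕜 x ∧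
    c = caQ (fun n => T (x n)) }

/-- fix_{c₀}(T) (real scalars). -/
noncomputable def fixc0 {X Y : Type*} [NormedAddCommGroup X] [NormedSpace ℝ X]
    [NormedAddCommGroup Y] [NormedSpace ℝ Y] (T : X →L[ℝ] Y) : ℝ :=
  sSup (insert (0:ℝ) { c | ∃ (X₀ : Submodule ℝ X) (U : C₀(ℕ, ℝ) ≃L[ℝ] X₀)
      (V : (X₀.map (T : X →ₗ[ℝ] Y)) ≃L[ℝ] C₀(ℕ, ℝ)),
    (∀ x : X₀, (U (V ⟨T x, Submodule.mem_map_of_mem x.2⟩) : X) = (x : X)) ∧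
    c = (‖(U : C₀(ℕ, ℝ) →L[ℝ] X₀)‖ *
        ‖(V : (X₀.map (T : X →ₗ[ℝ] Y)) →L[ℝ] C₀(ℕ, ℝ))‖)⁻¹ })

end


section MyHelpers

open NormedSpace Finset

variable {X : Type*} [NormedAddCommGroup X] [NormedSpace ℝ X]
variable {Y : Type*} [NormedAddCommGroup Y] [NormedSpace ℝ Y]

lemma aux_wuc_sum_le {x : ℕ → X} (h : UnitWUC ℝ x) (f : StrongDual ℝ X) {M : ℝ}
    (hM : 0 < M) (hf : ‖f‖ ≤ M) (N : ℕ) : ∑ i ∈ range N, ‖f (x i)‖ ≤ M := by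
  have h1 : ‖M⁻¹ • f‖ ≤ 1 := by
    rw [norm_smul, norm_inv, Real.norm_of_nonneg hM.le, inv_mul_le_one₀ hM]
    exact hf
  have h2 := h (M⁻¹ • f) h1 N
  simp only [ContinuousLinearMap.smul_apply, norm_smul, norm_inv,
    Real.norm_of_nonneg hM.le, ← Finset.mul_sum] at h2
  calc ∑ i ∈ Finset.range N, ‖f (x i)‖ = M * (M⁻¹ * ∑ i ∈ Finset.range N, ‖f (x i)‖) := by
        field_simp
    _ ≤ M * 1 := by nlinarith [h2]
    _ = M := mul_one M

lemma aux_wuc_term_le {x : ℕ → X} (h : UnitWUC ℝ x) (f : StrongDual ℝ X) {M : ℝ}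
    (hM : 0 < M) (hf : ‖f‖ ≤ M) (n : ℕ) : ‖f (x n)‖ ≤ M :=
  le_trans (Finset.single_le_sum (f := fun i => ‖f (x i)‖)
    (fun i _ => norm_nonneg _) (Finset.self_mem_range_succ n)) (aux_wuc_sum_le h f hM hf (n + 1))

lemma aux_wuc_norm_le {x : ℕ → X} (h : UnitWUC ℝ x) (n : ℕ) : ‖x n‖ ≤ 1 := by
  apply norm_le_dual_bound ℝ _ zero_le_one
  intro f
  rcases eq_or_lt_of_le (norm_nonneg f) with h0 | h0
  · have hf0 : f = 0 := by rwa [eq_comm, norm_eq_zero] at h0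
    simp [hf0]
  · rw [one_mul]; exact aux_wuc_term_le h f h0 le_rfl n

lemma aux_sSup_dual (y : Y) :
    sSup {r : ℝ | ∃ f : StrongDual ℝ Y, ‖f‖ ≤ 1 ∧ r = ‖f y‖} = ‖y‖ := by
  apply le_antisymm
  · apply Real.sSup_le
    · rintro r ⟨f, hf, rfl⟩
      calc ‖f y‖ ≤ ‖f‖ * ‖y‖ := f.le_opNorm y
        _ ≤ 1 * ‖y‖ := by gcongr
        _ = ‖y‖ := one_mul _
    · exact norm_nonneg y
  · obtain ⟨g, hg1, hg2⟩ := exists_dual_vector'' ℝ y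
    apply le_csSup
    · exact ⟨‖y‖, by rintro r ⟨f, hf, rfl⟩; calc ‖f y‖ ≤ ‖f‖ * ‖y‖ := f.le_opNorm y
        _ ≤ 1 * ‖y‖ := by gcongr
        _ = ‖y‖ := one_mul _⟩
    · exact ⟨g, hg1, by rw [hg2]; simp [Real.norm_of_nonneg (norm_nonneg y)]⟩

lemma aux_sSupA_nonneg (y : ℕ → Y) (n : ℕ) :
    0 ≤ sSup { r : ℝ | ∃ k ≥ n, ∃ l ≥ n, r = ‖y k - y l‖ } :=
  Real.sSup_nonneg (by rintro r ⟨k, _, l, _, rfl⟩; exact norm_nonneg _)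

lemma aux_caQ_le (y : ℕ → Y) (n : ℕ) :
    caQ y ≤ sSup { r : ℝ | ∃ k ≥ n, ∃ l ≥ n, r = ‖y k - y l‖ } :=
  ciInf_le ⟨0, by rintro r ⟨m, rfl⟩; exact aux_sSupA_nonneg y m⟩ n

lemma aux_le_caQ (y : ℕ → Y) (a : ℝ)
    (h : ∀ n : ℕ, a ≤ sSup { r : ℝ | ∃ k ≥ n, ∃ l ≥ n, r = ‖y k - y l‖ }) : a ≤ caQ y :=
  le_ciInf h

lemma aux_sSupA_le {y : ℕ → Y} {B : ℝ} (hB : 0 ≤ B) (h : ∀ k l, ‖y k - y l‖ ≤ B) (n : ℕ) :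
    sSup { r : ℝ | ∃ k ≥ n, ∃ l ≥ n, r = ‖y k - y l‖ } ≤ B :=
  Real.sSup_le (by rintro r ⟨k, _, l, _, rfl⟩; exact h k l) hB

lemma aux_caQ_const (y : Y) : caQ (fun _ : ℕ => y) = 0 := by
  apply le_antisymm
  · refine le_trans (aux_caQ_le _ 0) (aux_sSupA_le le_rfl (fun k l => by simp) 0)
  · exact aux_le_caQ _ 0 (aux_sSupA_nonneg _)

lemma aux_partial_bound {x : ℕ → X} (h : UnitWUC ℝ x) (T : X →L[ℝ] Y) (k : ℕ) :
    ‖∑ i ∈ range k, T (x i)‖ ≤ max ‖T‖ 1 := by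
  obtain ⟨g, hg1, hg2⟩ := exists_dual_vector'' ℝ (∑ i ∈ range k, T (x i))
  have h0 : ‖∑ i ∈ range k, T (x i)‖ = g (∑ i ∈ range k, T (x i)) := by
    rw [hg2]; norm_num
  have hm : (0:ℝ) < max ‖T‖ 1 := lt_of_lt_of_le one_pos (le_max_right _ _)
  have hcomp : ‖g.comp T‖ ≤ max ‖T‖ 1 := by
    calc ‖g.comp T‖ ≤ ‖g‖ * ‖T‖ := g.opNorm_comp_le T
      _ ≤ 1 * ‖T‖ := by gcongr
      _ = ‖T‖ := one_mul _
      _ ≤ max ‖T‖ 1 := le_max_left _ _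
  rw [h0, map_sum]
  calc ∑ i ∈ range k, g (T (x i)) ≤ ∑ i ∈ range k, ‖(g.comp T) (x i)‖ := by
        apply Finset.sum_le_sum
        intro i _
        exact le_trans (le_abs_self _) (le_of_eq (Real.norm_eq_abs _).symm)
    _ ≤ max ‖T‖ 1 := aux_wuc_sum_le h (g.comp T) hm hcomp k

lemma aux_ucQ_bddAbove (T : X →L[ℝ] Y) :
    BddAbove { c | ∃ x : ℕ → X, UnitWUC ℝ x ∧
      c = caQ (fun n => ∑ i ∈ Finset.range n, T (x i)) } := by
  refine ⟨2 * max ‖T‖ 1, ?_⟩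
  rintro c ⟨x, hx, rfl⟩
  refine le_trans (aux_caQ_le _ 0) (aux_sSupA_le (by positivity) (fun k l => ?_) 0)
  calc ‖(∑ i ∈ Finset.range k, T (x i)) - ∑ i ∈ Finset.range l, T (x i)‖
      ≤ ‖∑ i ∈ Finset.range k, T (x i)‖ + ‖∑ i ∈ Finset.range l, T (x i)‖ := norm_sub_le _ _
    _ ≤ max ‖T‖ 1 + max ‖T‖ 1 := add_le_add (aux_partial_bound hx T k) (aux_partial_bound hx T l)
    _ = 2 * max ‖T‖ 1 := by ring

lemma aux_zero_wuc : UnitWUC ℝ (fun _ : ℕ => (0 : X)) := by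
  intro f hf N; simp

lemma aux_ucQ_nonneg (T : X →L[ℝ] Y) : 0 ≤ ucQ ℝ T := by
  apply le_csSup (aux_ucQ_bddAbove T)
  refine ⟨fun _ => 0, aux_zero_wuc, ?_⟩
  have hz : (fun n => ∑ i ∈ Finset.range n, T (0:X)) = fun _ : ℕ => (0:Y) := by
    funext n; simp
  rw [hz, aux_caQ_const]

lemma aux_etaM_bddAbove {K : Set (StrongDual ℝ X)} {M : ℝ} (hM : 0 < M)
    (hK : ∀ f ∈ K, ‖f‖ ≤ M) :
    BddAbove { c | ∃ x : ℕ → X, UnitWUC ℝ x ∧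
      c = Filter.limsup (fun n => sSup { r : ℝ | ∃ f ∈ K, r = ‖f (x n)‖ }) atTop } := by
  refine ⟨M, ?_⟩
  rintro c ⟨x, hx, rfl⟩
  apply Filter.limsup_le_of_le
  · apply Filter.isCoboundedUnder_le_of_le atTop (x := 0)
    intro n; exact Real.sSup_nonneg (by rintro r ⟨f, hf, rfl⟩; exact norm_nonneg _)
  · apply Eventually.of_forall
    intro n
    apply Real.sSup_le _ hM.le
    rintro r ⟨f, hf, rfl⟩
    calc ‖f (x n)‖ ≤ ‖f‖ * ‖x n‖ := f.le_opNorm _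
      _ ≤ M * 1 := mul_le_mul (hK f hf) (aux_wuc_norm_le hx n) (norm_nonneg _) hM.le
      _ = M := mul_one M

lemma aux_etaM_nonneg {K : Set (StrongDual ℝ X)}
    (hbdd : BddAbove { c | ∃ x : ℕ → X, UnitWUC ℝ x ∧
      c = Filter.limsup (fun n => sSup { r : ℝ | ∃ f ∈ K, r = ‖f (x n)‖ }) atTop }) :
    0 ≤ etaM ℝ K := by
  apply le_csSup hbdd
  refine ⟨fun _ => 0, aux_zero_wuc, ?_⟩
  have hz : (fun n : ℕ => sSup { r : ℝ | ∃ f ∈ K, r = ‖(f : StrongDual ℝ X) ((fun _ => (0:X)) n)‖ })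
      = fun _ : ℕ => (0:ℝ) := by
    funext n
    apply le_antisymm
    · apply Real.sSup_le _ le_rfl
      rintro r ⟨f, hf, rfl⟩; simp
    · exact Real.sSup_nonneg (by rintro r ⟨f, hf, rfl⟩; exact norm_nonneg _)
  rw [hz, limsup_const]

lemma aux_limsup_le_caQ {x : ℕ → X} (hx : UnitWUC ℝ x) (T : X →L[ℝ] Y) :
    Filter.limsup (fun n => ‖T (x n)‖) atTop ≤ caQ (fun n => ∑ i ∈ Finset.range n, T (x i)) := by
  apply aux_le_caQ
  intro n
  apply Filter.limsup_le_of_le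
  · exact Filter.isCoboundedUnder_le_of_le atTop (x := 0) fun m => norm_nonneg _
  · filter_upwards [eventually_ge_atTop n] with m hm
    apply le_csSup
    · refine ⟨2 * max ‖T‖ 1, ?_⟩
      rintro r ⟨k, _, l, _, rfl⟩
      calc ‖(∑ i ∈ Finset.range k, T (x i)) - ∑ i ∈ Finset.range l, T (x i)‖
          ≤ ‖∑ i ∈ Finset.range k, T (x i)‖ + ‖∑ i ∈ Finset.range l, T (x i)‖ := norm_sub_le _ _
        _ ≤ max ‖T‖ 1 + max ‖T‖ 1 :=
            add_le_add (aux_partial_bound hx T k) (aux_partial_bound hx T l)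
        _ = 2 * max ‖T‖ 1 := by ring
    · refine ⟨m + 1, le_trans hm (Nat.le_succ m), m, hm, ?_⟩
      rw [Finset.sum_range_succ, add_sub_cancel_left]

lemma aux_deBlasi_set_nonempty {Z : Type*} [NormedAddCommGroup Z] [NormedSpace ℝ Z]
    {A : Set Z} {M : ℝ} (hM : 0 ≤ M) (hA : ∀ a ∈ A, ‖a‖ ≤ M) :
    Set.Nonempty { c | 0 ≤ c ∧ ∃ K : Set Z, K.Nonempty ∧ WeaklyCompactSet ℝ K ∧
      ∀ a ∈ A, Metric.infDist a K ≤ c } := by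
  refine ⟨M, hM, {0}, Set.singleton_nonempty 0, ?_, ?_⟩
  · unfold WeaklyCompactSet
    rw [Set.image_singleton]
    exact isCompact_singleton
  · intro a ha
    rw [Metric.infDist_singleton, dist_zero_right]
    exact hA a ha

lemma aux_deBlasi_mono {Z : Type*} [NormedAddCommGroup Z] [NormedSpace ℝ Z]
    {A B : Set Z} (h : A ⊆ B)
    (hB : Set.Nonempty { c | 0 ≤ c ∧ ∃ K : Set Z, K.Nonempty ∧ WeaklyCompactSet ℝ K ∧
      ∀ a ∈ B, Metric.infDist a K ≤ c }) :
    deBlasi ℝ A ≤ deBlasi ℝ B := by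
  apply csInf_le_csInf
  · exact ⟨0, fun c hc => hc.1⟩
  · exact hB
  · rintro c ⟨hc0, K, hKne, hKw, hKd⟩
    exact ⟨hc0, K, hKne, hKw, fun a ha => hKd a (h ha)⟩

lemma aux_ucQ_le_etaM {K : Set (StrongDual ℝ X)} {M : ℝ} (hM : 1 ≤ M)
    (hKnorm : ∀ f ∈ K, ‖f‖ ≤ M) (T : X →L[ℝ] Y)
    (hT : ∀ (w : X) (b : ℝ), 0 ≤ b → (∀ f ∈ K, ‖f w‖ ≤ b) → ‖T w‖ ≤ b) :
    ucQ ℝ T ≤ etaM ℝ K := by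
  have hMpos : (0:ℝ) < M := lt_of_lt_of_le one_pos hM
  have hbddEta := aux_etaM_bddAbove hMpos hKnorm
  have hEta0 : 0 ≤ etaM ℝ K := aux_etaM_nonneg hbddEta
  apply Real.sSup_le _ hEta0
  rintro c ⟨x, hx, rfl⟩
  set S : ℕ → Y := fun n => ∑ i ∈ Finset.range n, T (x i) with hS
  apply le_of_forall_pos_le_add
  intro ε hε
  rcases le_or_gt (caQ S) ε with hle | hlt
  · linarith
  have hc : 0 < caQ S - ε := by linarith
  have step : ∀ n, ∃ q : ℕ × ℕ, n ≤ q.1 ∧ q.1 < q.2 ∧ caQ S - ε < ‖S q.2 - S q.1‖ := by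
    intro n
    have hlt2 : caQ S - ε < sSup { r : ℝ | ∃ k ≥ n, ∃ l ≥ n, r = ‖S k - S l‖ } :=
      lt_of_lt_of_le (by linarith) (aux_caQ_le S n)
    have hne : ({ r : ℝ | ∃ k ≥ n, ∃ l ≥ n, r = ‖S k - S l‖ }).Nonempty :=
      ⟨‖S n - S n‖, n, le_rfl, n, le_rfl, rfl⟩
    obtain ⟨r, hrmem, hr⟩ := exists_lt_of_lt_csSup hne hlt2
    obtain ⟨k, hk, l, hl, rfl⟩ := hrmem
    rcases lt_trichotomy l k with hlk | hlk | hlk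
    · exact ⟨(l, k), hl, hlk, hr⟩
    · exfalso; rw [hlk, sub_self, norm_zero] at hr; linarith
    · exact ⟨(k, l), hk, hlk, by rwa [norm_sub_rev]⟩
  choose F hF1 hF2 hF3 using step
  let p : ℕ → ℕ × ℕ := fun j => Nat.rec (F 0) (fun _ q => F q.2) j
  have hplt : ∀ j, (p j).1 < (p j).2 := by
    intro j; cases j with
    | zero => exact hF2 0
    | succ m => exact hF2 _
  have hpnorm : ∀ j, caQ S - ε < ‖S (p j).2 - S (p j).1‖ := by
    intro j; cases j with
    | zero => exact hF3 0
    | succ m => exact hF3 _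
  have hchain : ∀ j, (p j).2 ≤ (p (j + 1)).1 := fun j => hF1 (p j).2
  set z : ℕ → X := fun j => ∑ i ∈ Finset.Ico (p j).1 (p j).2, x i with hz
  have hzwuc : UnitWUC ℝ z := by
    intro f hf N
    have key : ∀ N : ℕ, ∑ j ∈ Finset.range N, ∑ i ∈ Finset.Ico (p j).1 (p j).2, ‖f (x i)‖ ≤
        ∑ i ∈ Finset.range (p N).1, ‖f (x i)‖ := by
      intro N
      induction N with
      | zero =>
        simp only [Finset.range_zero, Finset.sum_empty]
        exact Finset.sum_nonneg fun i _ => norm_nonneg _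
      | succ m ih =>
        rw [Finset.sum_range_succ]
        have h1 : (∑ i ∈ Finset.range (p m).1, ‖f (x i)‖) +
            ∑ i ∈ Finset.Ico (p m).1 (p m).2, ‖f (x i)‖ =
            ∑ i ∈ Finset.range (p m).2, ‖f (x i)‖ :=
          Finset.sum_range_add_sum_Ico _ (hplt m).le
        have h2 : ∑ i ∈ Finset.range (p m).2, ‖f (x i)‖ ≤
            ∑ i ∈ Finset.range (p (m + 1)).1, ‖f (x i)‖ :=
          Finset.sum_le_sum_of_subset_of_nonneg
            (Finset.range_subset_range.mpr (hchain m)) (fun i _ _ => norm_nonneg _)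
        have h3 := add_le_add_right ih (∑ i ∈ Finset.Ico (p m).1 (p m).2, ‖f (x i)‖)
        linarith
    calc ∑ j ∈ Finset.range N, ‖f (z j)‖
        ≤ ∑ j ∈ Finset.range N, ∑ i ∈ Finset.Ico (p j).1 (p j).2, ‖f (x i)‖ := by
          apply Finset.sum_le_sum
          intro j _
          have : f (z j) = ∑ i ∈ Finset.Ico (p j).1 (p j).2, f (x i) := by
            rw [hz]; exact map_sum f _ _
          rw [this]
          exact norm_sum_le _ _
      _ ≤ ∑ i ∈ Finset.range (p N).1, ‖f (x i)‖ := key N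
      _ ≤ 1 := hx f hf _
  set h : ℕ → ℝ := fun j => sSup { r : ℝ | ∃ f ∈ K, r = ‖f (z j)‖ } with hh
  have hhbdd : ∀ j, BddAbove { r : ℝ | ∃ f ∈ K, r = ‖f (z j)‖ } := by
    intro j
    refine ⟨M, ?_⟩
    rintro r ⟨f, hf, rfl⟩
    calc ‖f (z j)‖ ≤ ‖f‖ * ‖z j‖ := f.le_opNorm _
      _ ≤ M * 1 := mul_le_mul (hKnorm f hf) (aux_wuc_norm_le hzwuc j) (norm_nonneg _) hMpos.le
      _ = M := mul_one M
  have hhle : ∀ j, h j ≤ M := by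
    intro j
    apply Real.sSup_le _ hMpos.le
    rintro r ⟨f, hf, rfl⟩
    calc ‖f (z j)‖ ≤ ‖f‖ * ‖z j‖ := f.le_opNorm _
      _ ≤ M * 1 := mul_le_mul (hKnorm f hf) (aux_wuc_norm_le hzwuc j) (norm_nonneg _) hMpos.le
      _ = M := mul_one M
  have hh0 : ∀ j, 0 ≤ h j :=
    fun j => Real.sSup_nonneg (by rintro r ⟨f, hf, rfl⟩; exact norm_nonneg _)
  have hTz : ∀ j, T (z j) = S (p j).2 - S (p j).1 := by
    intro j
    rw [hz]
    rw [map_sum]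
    exact Finset.sum_Ico_eq_sub (fun i => T (x i)) (hplt j).le
  have hlow : ∀ j, caQ S - ε < h j := by
    intro j
    have h1 : ‖T (z j)‖ ≤ h j :=
      hT (z j) (h j) (hh0 j) (fun f hf => le_csSup (hhbdd j) ⟨f, hf, rfl⟩)
    rw [hTz j] at h1
    exact lt_of_lt_of_le (hpnorm j) h1
  have hlim : caQ S - ε ≤ Filter.limsup h atTop := by
    apply Filter.le_limsup_of_frequently_le
    · exact (Eventually.of_forall fun j => (hlow j).le).frequently
    · exact Filter.isBoundedUnder_of ⟨M, fun j => hhle j⟩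
  have hmem : Filter.limsup h atTop ∈ { c | ∃ x : ℕ → X, UnitWUC ℝ x ∧
      c = Filter.limsup (fun n => sSup { r : ℝ | ∃ f ∈ K, r = ‖f (x n)‖ }) atTop } :=
    ⟨z, hzwuc, rfl⟩
  have hfin : Filter.limsup h atTop ≤ etaM ℝ K := le_csSup hbddEta hmem
  linarith

end MyHelpers

/-- `ω(K) ≤ C·η(K)` for all bounded `K ⊆ X*` iff `ω(T*) ≤ C·uc(T)` for all
operators from `X`. -/
theorem statement7 {X : Type} [NormedAddCommGroup X] [NormedSpace ℝ X] [CompleteSpace X]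
    (C : ℝ) (hC : 0 < C) :
    (∀ K : Set (StrongDual ℝ X), Bornology.IsBounded K →
      deBlasi ℝ K ≤ C * etaM ℝ K) ↔
    (∀ (Y : Type) [NormedAddCommGroup Y] [NormedSpace ℝ Y] [CompleteSpace Y]
      (T : X →L[ℝ] Y), deBlasi ℝ (dualBallImage ℝ T) ≤ C * ucQ ℝ T) := by
  constructor
  · -- forward
    intro hyp Y _ _ _ T
    have hsub : dualBallImage ℝ T ⊆ Metric.closedBall 0 ‖T‖ := by
      rintro g ⟨f, hf, rfl⟩
      rw [mem_closedBall_zero_iff]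
      calc ‖f.comp T‖ ≤ ‖f‖ * ‖T‖ := f.opNorm_comp_le T
        _ ≤ 1 * ‖T‖ := by gcongr
        _ = ‖T‖ := one_mul _
    have hbdd : Bornology.IsBounded (dualBallImage ℝ T) :=
      (Metric.isBounded_closedBall).subset hsub
    have key : etaM ℝ (dualBallImage ℝ T) ≤ ucQ ℝ T := by
      apply Real.sSup_le _ (aux_ucQ_nonneg T)
      rintro c ⟨x, hx, rfl⟩
      have heq : (fun n => sSup { r : ℝ | ∃ f ∈ dualBallImage ℝ T, r = ‖f (x n)‖ }) =
          fun n => ‖T (x n)‖ := by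
        funext n
        have hset : { r : ℝ | ∃ f ∈ dualBallImage ℝ T, r = ‖f (x n)‖ } =
            { r : ℝ | ∃ f : StrongDual ℝ Y, ‖f‖ ≤ 1 ∧ r = ‖f (T (x n))‖ } := by
          ext r
          constructor
          · rintro ⟨g, ⟨f, hf, rfl⟩, rfl⟩
            exact ⟨f, hf, rfl⟩
          · rintro ⟨f, hf, rfl⟩
            exact ⟨f.comp T, ⟨f, hf, rfl⟩, rfl⟩
        rw [hset, aux_sSup_dual]
      rw [heq]
      exact le_trans (aux_limsup_le_caQ hx T) (le_csSup (aux_ucQ_bddAbove T) ⟨x, hx, rfl⟩)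
    calc deBlasi ℝ (dualBallImage ℝ T) ≤ C * etaM ℝ (dualBallImage ℝ T) := hyp _ hbdd
      _ ≤ C * ucQ ℝ T := mul_le_mul_of_nonneg_left key hC.le
  · -- converse
    intro hyp K hK
    obtain ⟨M0, hM0⟩ := hK.subset_closedBall 0
    set M : ℝ := max M0 1 with hMdef
    have hM1 : (1:ℝ) ≤ M := le_max_right _ _
    have hMpos : (0:ℝ) < M := lt_of_lt_of_le one_pos hM1
    have hKM : ∀ f ∈ K, ‖f‖ ≤ M := by
      intro f hf
      have := hM0 hf
      rw [mem_closedBall_zero_iff] at this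
      exact le_trans this (le_max_left _ _)
    -- the operator T : X → (K →ᵇ ℝ)
    have hbound : ∀ (v : X) (f : K), ‖(f : StrongDual ℝ X) v‖ ≤ M * ‖v‖ := by
      intro v f
      calc ‖(f : StrongDual ℝ X) v‖ ≤ ‖(f : StrongDual ℝ X)‖ * ‖v‖ :=
            (f : StrongDual ℝ X).le_opNorm v
        _ ≤ M * ‖v‖ := by gcongr; exact hKM _ f.2
    have hcont : ∀ v : X, Continuous fun f : K => (f : StrongDual ℝ X) v := by
      intro v
      exact ((NormedSpace.inclusionInDoubleDual ℝ X v).continuous).comp continuous_subtype_val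
    let L : X →ₗ[ℝ] (BoundedContinuousFunction (↥K) ℝ) :=
      { toFun := fun v => BoundedContinuousFunction.ofNormedAddCommGroup
          (fun f : K => (f : StrongDual ℝ X) v) (hcont v) (M * ‖v‖) (hbound v)
        map_add' := by
          intro v w
          ext f
          simp
        map_smul' := by
          intro c v
          ext f
          simp }
    have hLnorm : ∀ v : X, ‖L v‖ ≤ M * ‖v‖ := by
      intro v
      exact BoundedContinuousFunction.norm_ofNormedAddCommGroup_le (hcont v)
        (mul_nonneg hMpos.le (norm_nonneg v)) (hbound v)
    let T : X →L[ℝ] (BoundedContinuousFunction (↥K) ℝ) := L.mkContinuous M hLnorm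
    have happ : ∀ (v : X) (f : K), T v f = (f : StrongDual ℝ X) v := fun v f => rfl
    -- K ⊆ dualBallImage T
    have hsub : K ⊆ dualBallImage ℝ T := by
      intro f hf
      refine ⟨BoundedContinuousFunction.evalCLM ℝ (⟨f, hf⟩ : K), ?_, ?_⟩
      · apply ContinuousLinearMap.opNorm_le_bound _ zero_le_one
        intro u
        rw [one_mul]
        exact u.norm_coe_le_norm _
      · ext v
        exact (happ v ⟨f, hf⟩).symm
    -- property hT
    have hT : ∀ (w : X) (b : ℝ), 0 ≤ b → (∀ f ∈ K, ‖f w‖ ≤ b) → ‖T w‖ ≤ b := by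
      intro w b hb hball
      rw [BoundedContinuousFunction.norm_le hb]
      intro f
      rw [happ w f]
      exact hball _ f.2
    -- dualBallImage T is norm-bounded by M
    have hdbb : ∀ g ∈ dualBallImage ℝ T, ‖g‖ ≤ M := by
      rintro g ⟨f, hf, rfl⟩
      calc ‖f.comp T‖ ≤ ‖f‖ * ‖T‖ := f.opNorm_comp_le T
        _ ≤ 1 * M := by
            apply mul_le_mul hf _ (norm_nonneg T) zero_le_one
            exact L.mkContinuous_norm_le hMpos.le hLnorm
        _ = M := one_mul M
    calc deBlasi ℝ K ≤ deBlasi ℝ (dualBallImage ℝ T) :=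
          aux_deBlasi_mono hsub (aux_deBlasi_set_nonempty hMpos.le hdbb)
      _ ≤ C * ucQ ℝ T := hyp _ T
      _ ≤ C * etaM ℝ K := mul_le_mul_of_nonneg_left (aux_ucQ_le_etaM hM1 hKM T hT) hC.le
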